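/- arXiv:1102.2876 — 8 statements merged into one kernel-verified Lean document; each statement's English description precedes it below -/
import Mathlib

section
/- Let ℓ₀, ℓ₁ ∈ B_c(Y). For every λ ∈ ℝ the function (y, y', s, s') ↦ ℓ₀(y, y', s − s')·ℓ₁(y', y, s' − s)·(χ^λ(s') − χ^λ(s)) is integrable on Y × Y × ℝ × ℝ, and σ₁^λ(ℓ₀, ℓ₁) = σ₁⁰(ℓ₀, ℓ₁) for every λ ∈ ℝ; that is, Roe's functional σ₁^λ is well defined and its value is independent of λ. -/
open MeasureTheory

noncomputable section

/-- The indicator function of `(-∞, -λ] ⊆ ℝ`, complex-valued. -/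
def chi (l : ℝ) (s : ℝ) : ℂ := if s ≤ -l then 1 else 0

/-- `ℓ` belongs to `B_c(Y)`: it is continuous and supported in `Y × Y × [-R, R]`
for some `R > 0`. -/
def MemBc {Y : Type*} [TopologicalSpace Y] (ℓ : Y → Y → ℝ → ℂ) : Prop :=
  Continuous (fun q : Y × Y × ℝ => ℓ q.1 q.2.1 q.2.2) ∧
    ∃ R > (0 : ℝ), ∀ y y' t, t ∉ Set.Icc (-R) R → ℓ y y' t = 0

/-- Roe's functional `σ₁^λ` in kernel form. -/
def sigma1 {Y : Type*} [MeasurableSpace Y] (μ : Measure Y) (l : ℝ)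
    (ℓ₀ ℓ₁ : Y → Y → ℝ → ℂ) : ℂ :=
  ∫ q : (Y × Y) × ℝ × ℝ,
    ℓ₀ q.1.1 q.1.2 (q.2.1 - q.2.2) * ℓ₁ q.1.2 q.1.1 (q.2.2 - q.2.1) *
      (chi l q.2.2 - chi l q.2.1) ∂((μ.prod μ).prod (volume.prod volume))

/-!
The integrand is bounded, and it vanishes unless `|s - s'| ≤ R` (support of `ℓ₀`) and `s`, `s'`
lie on opposite sides of `-λ`; hence it is supported in `Y × Y × [-λ - R, -λ + R]²`, a set of
finite measure, and is integrable. Independence of `λ` holds for arbitrary kernels: the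
translation `(s, s') ↦ (s + λ, s' + λ)` preserves Lebesgue measure, fixes `s - s'` and turns
`χ⁰` into `χ^λ`.
-/

open Set

theorem chi_add_right (a b s : ℝ) : chi a (s + b) = chi (a + b) s := by
  unfold chi
  exact if_congr (by constructor <;> intro <;> linarith) rfl rfl

theorem measurable_chi (l : ℝ) : Measurable (chi l) :=
  Measurable.ite measurableSet_Iic measurable_const measurable_const

theorem norm_chi_sub_chi_le_one (l s s' : ℝ) : ‖chi l s' - chi l s‖ ≤ 1 := by
  unfold chi
  split_ifs <;> simp

theorem mem_Icc_of_chi_sub_chi_ne_zero {l R s s' : ℝ} (hR : |s - s'| ≤ R)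
    (h : chi l s' - chi l s ≠ 0) :
    s ∈ Icc (-l - R) (-l + R) ∧ s' ∈ Icc (-l - R) (-l + R) := by
  unfold chi at h
  rw [abs_le] at hR
  split_ifs at h with h₁ h₂ h₂ <;> simp only [sub_self, ne_eq, not_true_eq_false] at h <;>
    exact ⟨⟨by linarith, by linarith⟩, ⟨by linarith, by linarith⟩⟩

section Kernel

variable {Y : Type*}

def sigma1Integrand (l : ℝ) (ℓ₀ ℓ₁ : Y → Y → ℝ → ℂ) (q : (Y × Y) × ℝ × ℝ) : ℂ :=
  ℓ₀ q.1.1 q.1.2 (q.2.1 - q.2.2) * ℓ₁ q.1.2 q.1.1 (q.2.2 - q.2.1) * (chi l q.2.2 - chi l q.2.1)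

theorem support_sigma1Integrand_subset {l R : ℝ} {ℓ₀ : Y → Y → ℝ → ℂ}
    (hR : ∀ y y' t, t ∉ Icc (-R) R → ℓ₀ y y' t = 0) (ℓ₁ : Y → Y → ℝ → ℂ) :
    Function.support (sigma1Integrand l ℓ₀ ℓ₁) ⊆
      univ ×ˢ (Icc (-l - R) (-l + R) ×ˢ Icc (-l - R) (-l + R)) := by
  rintro ⟨⟨y, y'⟩, s, s'⟩ hq
  have hℓ₀ : ℓ₀ y y' (s - s') ≠ 0 := left_ne_zero_of_mul (left_ne_zero_of_mul hq)
  have hs : |s - s'| ≤ R := abs_le.2 (not_not.1 (mt (hR y y' _) hℓ₀))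
  exact ⟨mem_univ _, mem_Icc_of_chi_sub_chi_ne_zero hs (right_ne_zero_of_mul hq)⟩

theorem norm_sigma1Integrand_le {l C₀ C₁ : ℝ} {ℓ₀ ℓ₁ : Y → Y → ℝ → ℂ}
    (hC₀ : ∀ y y' t, ‖ℓ₀ y y' t‖ ≤ C₀) (hC₁ : ∀ y y' t, ‖ℓ₁ y y' t‖ ≤ C₁)
    (q : (Y × Y) × ℝ × ℝ) : ‖sigma1Integrand l ℓ₀ ℓ₁ q‖ ≤ C₀ * C₁ := by
  have hC₀_nonneg : 0 ≤ C₀ := (norm_nonneg _).trans (hC₀ q.1.1 q.1.2 0)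
  have hC₁_nonneg : 0 ≤ C₁ := (norm_nonneg _).trans (hC₁ q.1.1 q.1.2 0)
  rw [sigma1Integrand, norm_mul, norm_mul, ← mul_one (C₀ * C₁)]
  gcongr
  exacts [hC₀ _ _ _, hC₁ _ _ _, norm_chi_sub_chi_le_one _ _ _]

theorem sigma1_eq_integral_sigma1Integrand [MeasurableSpace Y] (μ : Measure Y) (l : ℝ)
    (ℓ₀ ℓ₁ : Y → Y → ℝ → ℂ) :
    sigma1 μ l ℓ₀ ℓ₁ = ∫ q, sigma1Integrand l ℓ₀ ℓ₁ q ∂((μ.prod μ).prod (volume.prod volume)) :=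
  rfl

theorem sigma1_eq_sigma1_zero [MeasurableSpace Y] (μ : Measure Y) [SFinite μ]
    (l : ℝ) (ℓ₀ ℓ₁ : Y → Y → ℝ → ℂ) : sigma1 μ l ℓ₀ ℓ₁ = sigma1 μ 0 ℓ₀ ℓ₁ := by
  let shift : (Y × Y) × ℝ × ℝ ≃ᵐ (Y × Y) × ℝ × ℝ :=
    (MeasurableEquiv.refl _).prodCongr
      ((MeasurableEquiv.addRight l).prodCongr (MeasurableEquiv.addRight l))
  have hshift : MeasurePreserving shift ((μ.prod μ).prod (volume.prod volume))
      ((μ.prod μ).prod (volume.prod volume)) :=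
    (MeasurePreserving.id _).prod
      ((measurePreserving_add_right volume l).prod (measurePreserving_add_right volume l))
  rw [sigma1_eq_integral_sigma1Integrand, sigma1_eq_integral_sigma1Integrand,
    ← hshift.integral_comp' (sigma1Integrand 0 ℓ₀ ℓ₁)]
  congr 1 with ⟨p, s, s'⟩
  change _ = sigma1Integrand 0 ℓ₀ ℓ₁ (p, s + l, s' + l)
  simp only [sigma1Integrand, add_sub_add_right_eq_sub, chi_add_right, zero_add]

theorem MemBc.exists_norm_le [TopologicalSpace Y] [CompactSpace Y]
    {ℓ : Y → Y → ℝ → ℂ} (h : MemBc ℓ) : ∃ C, ∀ y y' t, ‖ℓ y y' t‖ ≤ C := by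
  obtain ⟨hc, R, hR_pos, hR⟩ := h
  obtain ⟨C, hC⟩ := (isCompact_univ.prod (isCompact_univ.prod (isCompact_Icc (a := -R) (b := R))))
    |>.exists_bound_of_continuousOn hc.continuousOn
  refine ⟨C, fun y y' t => ?_⟩
  by_cases ht : t ∈ Icc (-R) R
  · exact hC (y, y', t) ⟨mem_univ _, mem_univ _, ht⟩
  · rw [hR y y' t ht, norm_zero]
    exact (norm_nonneg _).trans (hC (y, y', R) ⟨mem_univ _, mem_univ _, by simp [hR_pos.le]⟩)

theorem measurable_sigma1Integrand [TopologicalSpace Y] [SecondCountableTopology Y]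
    [MeasurableSpace Y] [BorelSpace Y] {ℓ₀ ℓ₁ : Y → Y → ℝ → ℂ}
    (h₀ : Continuous fun q : Y × Y × ℝ => ℓ₀ q.1 q.2.1 q.2.2)
    (h₁ : Continuous fun q : Y × Y × ℝ => ℓ₁ q.1 q.2.1 q.2.2) (l : ℝ) :
    Measurable (sigma1Integrand l ℓ₀ ℓ₁) := by
  have hℓ₀ := h₀.measurable.comp (f := fun q : (Y × Y) × ℝ × ℝ => (q.1.1, q.1.2, q.2.1 - q.2.2))
    (by fun_prop)
  have hℓ₁ := h₁.measurable.comp (f := fun q : (Y × Y) × ℝ × ℝ => (q.1.2, q.1.1, q.2.2 - q.2.1))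
    (by fun_prop)
  exact (hℓ₀.mul hℓ₁).mul
    (((measurable_chi l).comp measurable_snd.snd).sub ((measurable_chi l).comp measurable_snd.fst))

theorem integrable_sigma1Integrand [TopologicalSpace Y] [CompactSpace Y]
    [SecondCountableTopology Y] [MeasurableSpace Y] [BorelSpace Y] (μ : Measure Y)
    [IsFiniteMeasure μ] {ℓ₀ ℓ₁ : Y → Y → ℝ → ℂ} (h₀ : MemBc ℓ₀) (h₁ : MemBc ℓ₁) (l : ℝ) :
    Integrable (sigma1Integrand l ℓ₀ ℓ₁) ((μ.prod μ).prod (volume.prod volume)) := by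
  obtain ⟨C₀, hC₀⟩ := h₀.exists_norm_le
  obtain ⟨C₁, hC₁⟩ := h₁.exists_norm_le
  obtain ⟨hc₀, R, -, hR⟩ := h₀
  rw [← integrableOn_iff_integrable_of_support_subset (support_sigma1Integrand_subset hR ℓ₁)]
  refine Measure.integrableOn_of_bounded ?_
    (measurable_sigma1Integrand hc₀ h₁.1 l).aestronglyMeasurable
    (Filter.Eventually.of_forall (norm_sigma1Integrand_le hC₀ hC₁))
  rw [Measure.prod_prod, Measure.prod_prod]
  exact ENNReal.mul_ne_top (measure_ne_top _ _)
    (ENNReal.mul_ne_top measure_Icc_lt_top.ne measure_Icc_lt_top.ne)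

end Kernel

/-- for `ℓ₀, ℓ₁ ∈ B_c(Y)` and every `λ ∈ ℝ`, the integrand defining
`σ₁^λ(ℓ₀, ℓ₁)` is integrable on `Y × Y × ℝ × ℝ`, and `σ₁^λ(ℓ₀, ℓ₁) = σ₁⁰(ℓ₀, ℓ₁)`. -/
theorem sigma1_integrable_and_lambda_independent
    {Y : Type*} [MetricSpace Y] [CompactSpace Y] [MeasurableSpace Y] [BorelSpace Y]
    (μ : Measure Y) [IsFiniteMeasure μ]
    (ℓ₀ ℓ₁ : Y → Y → ℝ → ℂ) (h₀ : MemBc ℓ₀) (h₁ : MemBc ℓ₁) (l : ℝ) :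
    Integrable (fun q : (Y × Y) × ℝ × ℝ =>
        ℓ₀ q.1.1 q.1.2 (q.2.1 - q.2.2) * ℓ₁ q.1.2 q.1.1 (q.2.2 - q.2.1) *
          (chi l q.2.2 - chi l q.2.1))
      ((μ.prod μ).prod (volume.prod volume)) ∧
    sigma1 μ l ℓ₀ ℓ₁ = sigma1 μ 0 ℓ₀ ℓ₁ :=
  ⟨integrable_sigma1Integrand μ h₀ h₁ l, sigma1_eq_sigma1_zero μ l ℓ₀ ℓ₁⟩

end
end

section
/- Let k, k' ∈ A_c(Y) with symbols ℓ = π_c(k) and ℓ' = π_c(k'). Then for every (y, s, y'', s'') the function (y', s') ↦ k(y, s, y', s')·k'(y', s', y'', s'') is integrable on Y × ℝ, the composed kernel k ∘ k' is a continuous function, and k ∘ k' belongs to A_c(Y) with symbol π_c(k ∘ k') = ℓ ⋆ ℓ'; i.e., there exists ν > 0 such that (k ∘ k')(y, s, y'', s'') = (ℓ ⋆ ℓ')(y, y'', s − s'') whenever s ≤ −ν and s'' ≤ −ν, and k ∘ k' has compact support in the complement of that region. In particular A_c(Y) is an algebra and π_c is an algebra homomorphism onto B_c(Y). -/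
/-! Kernels in `A_c(Y)` have finite propagation (they vanish where `|s - s'|` is large) and
their time support is bounded above. Finite propagation makes the integrand
`r ↦ k(p, r) k'(r, q)` compactly supported, locally uniformly in `(p, q)`, which gives
integrability and continuity of `k ∘ k'`. It also shows that, after enlarging `λ`, `k` agrees
with the kernel `ℓ(y, y', s - s')` of its symbol on each of the strips `s ≤ -λ` and `s' ≤ -λ`;
so far out `k ∘ k'` is the composition of the symbol kernels, which is `ℓ ⋆ ℓ'` by translation
invariance of Lebesgue measure. Propagation bounds and upper bounds of time supports add up
under composition, which gives compact support away from the corner. -/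

open MeasureTheory

noncomputable section

/-- The convolution product on `B_c(Y)`:
`(ℓ ⋆ ℓ')(y, y'', u) = ∫_Y ∫_ℝ ℓ(y, y', t) ℓ'(y', y'', u − t) dt dμ(y')`. -/
def conv {Y : Type*} [MeasurableSpace Y] (μ : Measure Y)
    (ℓ ℓ' : Y → Y → ℝ → ℂ) : Y → Y → ℝ → ℂ :=
  fun y y'' u => ∫ q : Y × ℝ, ℓ y q.1 q.2 * ℓ' q.1 y'' (u - q.2) ∂(μ.prod volume)

/-- `k` belongs to `A_c(Y)` with symbol `ℓ`: `k` is continuous; there is a `λ > 0`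
such that `k(y, s, y', s') = ℓ(y, y', s − s')` whenever `s ≤ −λ` and `s' ≤ −λ`, and
`k` has compact support in the complement of that region. -/
def MemAc {Y : Type*} [TopologicalSpace Y] (k : Y × ℝ → Y × ℝ → ℂ)
    (ℓ : Y → Y → ℝ → ℂ) : Prop :=
  Continuous (fun q : (Y × ℝ) × (Y × ℝ) => k q.1 q.2) ∧
    ∃ l > (0 : ℝ),
      (∀ y s y' s', s ≤ -l → s' ≤ -l → k (y, s) (y', s') = ℓ y y' (s - s')) ∧
      HasCompactSupport (fun q : (Y × ℝ) × (Y × ℝ) =>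
        if q.1.2 ≤ -l ∧ q.2.2 ≤ -l then 0 else k q.1 q.2)

/-- Composition of kernels:
`(k ∘ k')(y, s, y'', s'') = ∫_{Y×ℝ} k(y, s, y', s') k'(y', s', y'', s'') dμ(y') ds'`. -/
def kcomp {Y : Type*} [MeasurableSpace Y] (μ : Measure Y)
    (k k' : Y × ℝ → Y × ℝ → ℂ) : Y × ℝ → Y × ℝ → ℂ :=
  fun p q => ∫ r : Y × ℝ, k p r * k' r q ∂(μ.prod volume)

open Set

theorem continuous_integral_of_locally_uniform_compact_support
    {X Z E : Type*} [TopologicalSpace X] [LocallyCompactSpace X]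
    [TopologicalSpace Z] [MeasurableSpace Z] [OpensMeasurableSpace Z]
    {μ : Measure Z} [IsFiniteMeasureOnCompacts μ] [NormedAddCommGroup E] [NormedSpace ℝ E]
    {f : X → Z → E} (hf : Continuous (Function.uncurry f))
    (hfs : ∀ K : Set X, IsCompact K → ∃ L : Set Z, IsCompact L ∧ ∀ x ∈ K, ∀ z ∉ L, f x z = 0) :
    Continuous fun x => ∫ z, f x z ∂μ := by
  refine continuous_iff_continuousAt.2 fun x₀ => ?_
  obtain ⟨K, hK, hKx₀⟩ := exists_compact_mem_nhds x₀
  obtain ⟨L, hL, hfL⟩ := hfs K hK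
  exact (continuousOn_integral_of_compact_support hL hf.continuousOn
    fun x z hx hz => hfL x hx z hz).continuousAt hKx₀

section Kernels

variable {Y : Type*}

def PropagationLE (D : ℝ) (k : Y × ℝ → Y × ℝ → ℂ) : Prop :=
  ∀ p q, k p q ≠ 0 → |p.2 - q.2| ≤ D

def SupportedBelow (A : ℝ) (k : Y × ℝ → Y × ℝ → ℂ) : Prop :=
  ∀ p q, k p q ≠ 0 → p.2 ≤ A ∧ q.2 ≤ A

def symbolKernel (ℓ : Y → Y → ℝ → ℂ) : Y × ℝ → Y × ℝ → ℂ :=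
  fun p q => ℓ p.1 q.1 (p.2 - q.2)

theorem PropagationLE.mono {D D' : ℝ} {k : Y × ℝ → Y × ℝ → ℂ} (hk : PropagationLE D k)
    (hD : D ≤ D') : PropagationLE D' k :=
  fun p q hpq => (hk p q hpq).trans hD

theorem PropagationLE.eq_zero_of_notMem_Icc {D a b : ℝ} {k : Y × ℝ → Y × ℝ → ℂ}
    (hk : PropagationLE D k) {p r : Y × ℝ} (hp : p.2 ∈ Icc a b)
    (hr : r.2 ∉ Icc (a - D) (b + D)) : k p r = 0 := by
  by_contra h
  obtain ⟨h₁, h₂⟩ := abs_le.1 (hk p r h)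
  exact hr ⟨by linarith [hp.1], by linarith [hp.2]⟩

theorem propagationLE_symbolKernel {R : ℝ} {ℓ : Y → Y → ℝ → ℂ}
    (hℓ : ∀ y y' t, t ∉ Icc (-R) R → ℓ y y' t = 0) : PropagationLE R (symbolKernel ℓ) :=
  fun _ _ h => abs_le.2 (not_not.1 (mt (hℓ _ _ _) h))

theorem continuous_symbolKernel [TopologicalSpace Y] {ℓ : Y → Y → ℝ → ℂ}
    (hℓ : Continuous fun q : Y × Y × ℝ => ℓ q.1 q.2.1 q.2.2) :
    Continuous fun x : (Y × ℝ) × (Y × ℝ) => symbolKernel ℓ x.1 x.2 :=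
  hℓ.comp (f := fun x : (Y × ℝ) × (Y × ℝ) => (x.1.1, x.2.1, x.1.2 - x.2.2)) (by fun_prop)

/-- Off the corner, the two times of a point of these strips are more than `D` apart, so both
`k` and the symbol kernel vanish there. -/
theorem eq_symbol_of_le_or_le {D l : ℝ} {k : Y × ℝ → Y × ℝ → ℂ} {ℓ : Y → Y → ℝ → ℂ}
    (hk : PropagationLE D k) (hℓ : PropagationLE D (symbolKernel ℓ))
    (hcorner : ∀ y s y' s', s ≤ -l → s' ≤ -l → k (y, s) (y', s') = ℓ y y' (s - s'))
    {y y' : Y} {s s' : ℝ} (h : s ≤ -(l + D) ∨ s' ≤ -(l + D)) :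
    k (y, s) (y', s') = ℓ y y' (s - s') := by
  by_cases hc : s ≤ -l ∧ s' ≤ -l
  · exact hcorner y s y' s' hc.1 hc.2
  have hfar : ¬ |s - s'| ≤ D := fun hD => by
    obtain ⟨h₁, h₂⟩ := abs_le.1 hD
    rcases not_and_or.1 hc with hc | hc <;> rcases h with h | h <;>
      linarith [abs_nonneg (s - s')]
  rw [not_ne_iff.1 (mt (hk _ _) hfar)]
  exact (not_ne_iff.1 (mt (hℓ (y, s) (y', s')) hfar)).symm

theorem MemAc.exists_propagationLE_supportedBelow [TopologicalSpace Y]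
    {k : Y × ℝ → Y × ℝ → ℂ} {ℓ : Y → Y → ℝ → ℂ} (hℓ : MemBc ℓ) (hk : MemAc k ℓ) :
    ∃ D A, PropagationLE D k ∧ SupportedBelow A k := by
  obtain ⟨-, R, -, hℓR⟩ := hℓ
  obtain ⟨-, l, hl, hcorner, hcpt⟩ := hk
  obtain ⟨A, hA⟩ := hcpt.exists_bound_of_continuousOn
    (f := fun x : (Y × ℝ) × (Y × ℝ) => (x.1.2, x.2.2)) (by fun_prop)
  have off_corner : ∀ p q, k p q ≠ 0 → ¬(p.2 ≤ -l ∧ q.2 ≤ -l) → |p.2| ≤ A ∧ |q.2| ≤ A := by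
    intro p q hpq hc
    have hmem : (p, q) ∈ tsupport fun x : (Y × ℝ) × (Y × ℝ) =>
        if x.1.2 ≤ -l ∧ x.2.2 ≤ -l then 0 else k x.1 x.2 :=
      subset_tsupport _ (by rwa [Function.mem_support, if_neg hc])
    exact ⟨(norm_fst_le (p.2, q.2)).trans (hA _ hmem),
      (norm_snd_le (p.2, q.2)).trans (hA _ hmem)⟩
  refine ⟨max R (2 * A), max A 0, ?_, ?_⟩
  · rintro ⟨y, s⟩ ⟨y', s'⟩ hne
    by_cases hc : s ≤ -l ∧ s' ≤ -l
    · rw [hcorner y s y' s' hc.1 hc.2] at hne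
      exact (propagationLE_symbolKernel hℓR (y, s) (y', s') hne).trans (le_max_left _ _)
    · obtain ⟨hs, hs'⟩ := off_corner _ _ hne hc
      calc |s - s'| ≤ |s| + |s'| := abs_sub _ _
        _ ≤ max R (2 * A) := by linarith [le_max_right R (2 * A)]
  · rintro ⟨y, s⟩ ⟨y', s'⟩ hne
    by_cases hc : s ≤ -l ∧ s' ≤ -l
    · exact ⟨by linarith [le_max_right A 0], by linarith [le_max_right A 0]⟩
    · obtain ⟨hs, hs'⟩ := off_corner _ _ hne hc
      exact ⟨(le_abs_self s).trans (hs.trans (le_max_left _ _)),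
        (le_abs_self s').trans (hs'.trans (le_max_left _ _))⟩

theorem MemAc.exists_eq_symbol_of_le [TopologicalSpace Y]
    {k : Y × ℝ → Y × ℝ → ℂ} {ℓ : Y → Y → ℝ → ℂ} (hℓ : MemBc ℓ) (hk : MemAc k ℓ) :
    ∃ D A l, 0 < l ∧ PropagationLE D k ∧ SupportedBelow A k ∧
      (∀ y s y' s', s ≤ -l → k (y, s) (y', s') = ℓ y y' (s - s')) ∧
      (∀ y s y' s', s' ≤ -l → k (y, s) (y', s') = ℓ y y' (s - s')) := by
  obtain ⟨D, A, hkD, hkA⟩ := hk.exists_propagationLE_supportedBelow hℓ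
  obtain ⟨-, R, hR, hℓR⟩ := hℓ
  obtain ⟨-, l, hl, hcorner, -⟩ := hk
  have hk' := hkD.mono (le_max_left D R)
  have hℓ' := (propagationLE_symbolKernel hℓR).mono (le_max_right D R)
  refine ⟨D, A, l + max D R, add_pos hl (hR.trans_le (le_max_right D R)), hkD, hkA,
    fun y s y' s' hs => eq_symbol_of_le_or_le hk' hℓ' hcorner (.inl hs),
    fun y s y' s' hs' => eq_symbol_of_le_or_le hk' hℓ' hcorner (.inr hs')⟩

theorem exists_ne_zero_of_kcomp_ne_zero [MeasurableSpace Y] {μ : Measure Y}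
    {k k' : Y × ℝ → Y × ℝ → ℂ} {p q : Y × ℝ} (h : kcomp μ k k' p q ≠ 0) :
    ∃ r, k p r ≠ 0 ∧ k' r q ≠ 0 := by
  contrapose! h
  have : (fun r => k p r * k' r q) = 0 := funext fun r => by
    by_cases hr : k p r = 0 <;> simp [hr, h r]
  simp [kcomp, this]

theorem PropagationLE.kcomp [MeasurableSpace Y] (μ : Measure Y) {D D' : ℝ}
    {k k' : Y × ℝ → Y × ℝ → ℂ} (hk : PropagationLE D k) (hk' : PropagationLE D' k') :
    PropagationLE (D + D') (kcomp μ k k') := fun p q hpq => by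
  obtain ⟨r, hr, hr'⟩ := exists_ne_zero_of_kcomp_ne_zero hpq
  calc |p.2 - q.2| ≤ |p.2 - r.2| + |r.2 - q.2| := abs_sub_le _ _ _
    _ ≤ D + D' := add_le_add (hk p r hr) (hk' r q hr')

theorem SupportedBelow.kcomp [MeasurableSpace Y] (μ : Measure Y) {A A' : ℝ}
    {k k' : Y × ℝ → Y × ℝ → ℂ} (hk : SupportedBelow A k) (hk' : SupportedBelow A' k') :
    SupportedBelow (max A A') (kcomp μ k k') := fun p q hpq => by
  obtain ⟨r, hr, hr'⟩ := exists_ne_zero_of_kcomp_ne_zero hpq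
  exact ⟨(hk p r hr).1.trans (le_max_left _ _), (hk' r q hr').2.trans (le_max_right _ _)⟩

theorem hasCompactSupport_offCorner [TopologicalSpace Y] [CompactSpace Y] {D A : ℝ}
    {f : Y × ℝ → Y × ℝ → ℂ} (hD : PropagationLE D f) (hA : SupportedBelow A f) (ν : ℝ) :
    HasCompactSupport fun q : (Y × ℝ) × (Y × ℝ) =>
      if q.1.2 ≤ -ν ∧ q.2.2 ≤ -ν then 0 else f q.1 q.2 := by
  have hK := isCompact_univ (X := Y) |>.prod (isCompact_Icc (a := -ν - D) (b := A))
  refine .intro' (hK.prod hK) ((isClosed_univ.prod isClosed_Icc).prod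
    (isClosed_univ.prod isClosed_Icc)) fun ⟨p, q⟩ hpq => ?_
  dsimp only
  split_ifs with hc
  · rfl
  by_contra hne
  obtain ⟨h₁, h₂⟩ := abs_le.1 (hD p q hne)
  obtain ⟨hp, hq⟩ := hA p q hne
  refine hpq ⟨⟨trivial, ?_, hp⟩, trivial, ?_, hq⟩ <;>
    rcases not_and_or.1 hc with hc | hc <;> linarith

theorem kcomp_symbolKernel [MeasurableSpace Y] (μ : Measure Y) [SFinite μ]
    (ℓ ℓ' : Y → Y → ℝ → ℂ) (y y'' : Y) (s s'' : ℝ) :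
    kcomp μ (symbolKernel ℓ) (symbolKernel ℓ') (y, s) (y'', s'') =
      conv μ ℓ ℓ' y y'' (s - s'') := by
  have hsub : MeasurePreserving ((MeasurableEquiv.refl Y).prodCongr (MeasurableEquiv.subLeft s))
      (μ.prod volume) (μ.prod volume) :=
    (MeasurePreserving.id μ).prod (Measure.measurePreserving_sub_left volume s)
  rw [conv, ← hsub.integral_comp', kcomp]
  congr 1
  funext r
  change _ = ℓ y r.1 (s - r.2) * ℓ' r.1 y'' (s - s'' - (s - r.2))
  rw [sub_sub_sub_cancel_left]
  rfl

theorem kcomp_eq_conv_of_eq_symbol [MeasurableSpace Y] (μ : Measure Y) [SFinite μ]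
    {ℓ ℓ' : Y → Y → ℝ → ℂ} {k k' : Y × ℝ → Y × ℝ → ℂ} {l l' : ℝ}
    (hk : ∀ y s y' s', s ≤ -l → k (y, s) (y', s') = ℓ y y' (s - s'))
    (hk' : ∀ y s y' s', s' ≤ -l' → k' (y, s) (y', s') = ℓ' y y' (s - s'))
    {y y'' : Y} {s s'' : ℝ} (hs : s ≤ -l) (hs'' : s'' ≤ -l') :
    kcomp μ k k' (y, s) (y'', s'') = conv μ ℓ ℓ' y y'' (s - s'') := by
  rw [← kcomp_symbolKernel]
  simp only [kcomp]
  congr 1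
  funext ⟨y', s'⟩
  rw [hk _ _ _ _ hs, hk' _ _ _ _ hs'']
  rfl

variable [TopologicalSpace Y] [CompactSpace Y] [MeasurableSpace Y] [OpensMeasurableSpace Y]
  (μ : Measure Y) [IsFiniteMeasure μ]

theorem integrable_mul_of_propagationLE {D : ℝ} {k k' : Y × ℝ → Y × ℝ → ℂ}
    (hk : Continuous fun x : (Y × ℝ) × (Y × ℝ) => k x.1 x.2)
    (hk' : Continuous fun x : (Y × ℝ) × (Y × ℝ) => k' x.1 x.2) (hD : PropagationLE D k)
    (p q : Y × ℝ) : Integrable (fun r => k p r * k' r q) (μ.prod volume) := by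
  refine Continuous.integrable_of_hasCompactSupport
    ((hk.comp (Continuous.prodMk_right p)).mul (hk'.comp (Continuous.prodMk_left q))) ?_
  refine .intro' (K := univ ×ˢ Icc (p.2 - D) (p.2 + D)) (isCompact_univ.prod isCompact_Icc)
    (isClosed_univ.prod isClosed_Icc) fun r hr => ?_
  rw [hD.eq_zero_of_notMem_Icc ⟨le_rfl, le_rfl⟩ fun h => hr ⟨trivial, h⟩, zero_mul]

theorem continuous_kcomp [T2Space Y] {D : ℝ} {k k' : Y × ℝ → Y × ℝ → ℂ}
    (hk : Continuous fun x : (Y × ℝ) × (Y × ℝ) => k x.1 x.2)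
    (hk' : Continuous fun x : (Y × ℝ) × (Y × ℝ) => k' x.1 x.2) (hD : PropagationLE D k) :
    Continuous fun x : (Y × ℝ) × (Y × ℝ) => kcomp μ k k' x.1 x.2 := by
  refine continuous_integral_of_locally_uniform_compact_support
    (f := fun (x : (Y × ℝ) × (Y × ℝ)) (r : Y × ℝ) => k x.1 r * k' r x.2)
    ((hk.comp (continuous_fst.fst.prodMk continuous_snd)).mul
      (hk'.comp (continuous_snd.prodMk continuous_fst.snd))) fun K hK => ?_
  obtain ⟨M, hM⟩ := hK.exists_bound_of_continuousOn
    (f := fun x : (Y × ℝ) × (Y × ℝ) => x.1.2) (by fun_prop)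
  refine ⟨univ ×ˢ Icc (-M - D) (M + D), isCompact_univ.prod isCompact_Icc,
    fun x hx r hr => ?_⟩
  rw [hD.eq_zero_of_notMem_Icc (abs_le.1 (hM x hx)) fun h => hr ⟨trivial, h⟩, zero_mul]

theorem memBc_conv [T2Space Y] {ℓ ℓ' : Y → Y → ℝ → ℂ} (hℓ : MemBc ℓ) (hℓ' : MemBc ℓ') :
    MemBc (conv μ ℓ ℓ') := by
  obtain ⟨hℓc, R, hR, hℓR⟩ := hℓ
  obtain ⟨hℓ'c, R', hR', hℓ'R'⟩ := hℓ'
  have hconv : ∀ y y'' u, conv μ ℓ ℓ' y y'' u =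
      kcomp μ (symbolKernel ℓ) (symbolKernel ℓ') (y, u) (y'', 0) := fun y y'' u => by
    rw [kcomp_symbolKernel, sub_zero]
  refine ⟨?_, R + R', by positivity, fun y y'' u hu => ?_⟩
  · simp_rw [hconv]
    exact (continuous_kcomp μ (continuous_symbolKernel hℓc) (continuous_symbolKernel hℓ'c)
      (propagationLE_symbolKernel hℓR)).comp
      (f := fun q : Y × Y × ℝ => ((q.1, q.2.2), (q.2.1, 0))) (by fun_prop)
  · by_contra hne
    rw [hconv] at hne
    have := (propagationLE_symbolKernel hℓR).kcomp μ (propagationLE_symbolKernel hℓ'R') _ _ hne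
    exact hu (abs_le.1 (by simpa using this))

end Kernels

/-- for `k, k' ∈ A_c(Y)` with symbols `ℓ, ℓ'`, the integrand defining
`(k ∘ k')(y, s, y'', s'')` is integrable, the composed kernel is continuous, the
symbol `ℓ ⋆ ℓ'` lies in `B_c(Y)`, and `k ∘ k' ∈ A_c(Y)` with symbol `ℓ ⋆ ℓ'`; hence
`A_c(Y)` is an algebra and the symbol map is an algebra homomorphism onto `B_c(Y)`. -/
theorem Ac_algebra_symbol_homomorphism
    {Y : Type*} [MetricSpace Y] [CompactSpace Y] [MeasurableSpace Y] [BorelSpace Y]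
    (μ : Measure Y) [IsFiniteMeasure μ]
    (k k' : Y × ℝ → Y × ℝ → ℂ) (ℓ ℓ' : Y → Y → ℝ → ℂ)
    (hℓ : MemBc ℓ) (hℓ' : MemBc ℓ')
    (hk : MemAc k ℓ) (hk' : MemAc k' ℓ') :
    (∀ (y : Y) (s : ℝ) (y'' : Y) (s'' : ℝ),
        Integrable (fun r : Y × ℝ => k (y, s) r * k' r (y'', s'')) (μ.prod volume)) ∧
    Continuous (fun q : (Y × ℝ) × (Y × ℝ) => kcomp μ k k' q.1 q.2) ∧
    MemBc (conv μ ℓ ℓ') ∧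
    MemAc (kcomp μ k k') (conv μ ℓ ℓ') := by
  obtain ⟨D, A, l, hl, hkD, hkA, hkℓ, -⟩ := hk.exists_eq_symbol_of_le hℓ
  obtain ⟨D', A', l', -, hk'D, hk'A, -, hk'ℓ'⟩ := hk'.exists_eq_symbol_of_le hℓ'
  have hcont := continuous_kcomp μ hk.1 hk'.1 hkD
  refine ⟨fun y s y'' s'' => integrable_mul_of_propagationLE μ hk.1 hk'.1 hkD _ _, hcont,
    memBc_conv μ hℓ hℓ', hcont, max l l', lt_max_of_lt_left hl, fun y s y'' s'' hs hs'' => ?_,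
    hasCompactSupport_offCorner (hkD.kcomp μ hk'D) (hkA.kcomp μ hk'A) _⟩
  exact kcomp_eq_conv_of_eq_symbol μ hkℓ hk'ℓ'
    (hs.trans (neg_le_neg (le_max_left _ _))) (hs''.trans (neg_le_neg (le_max_right _ _)))
end
end

section
/- Let k ∈ A_c(Y) with symbol ℓ = π_c(k). Then: (i) the function φ_k(λ) = ∫_{Y×[−λ,∞)} k(y, x, y, x) dμ(y) dx − λ ∫_Y ℓ(y, y, 0) dμ(y) is constant for all sufficiently large λ, so the regularized trace τ₀^r(k) = lim_{λ→+∞} φ_k(λ) exists; (ii) the function (y, x) ↦ k(y, x, y, x) − χ⁰(x)·ℓ(y, y, 0) is integrable on Y × ℝ; and (iii) τ₀^r(k) = ∫_{Y×ℝ} ( k(y, x, y, x) − χ⁰(x) ℓ(y, y, 0) ) dμ(y) dx. -/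
/-!
On the diagonal, `k(y, x, y, x)` equals `ℓ(y, y, 0)` for `x ≤ -λ₀` and vanishes for large `x`,
so `f = k(y, x, y, x) - χ⁰(x) ℓ(y, y, 0)` is supported in the compact set `Y × [-λ₀, r]`
and is integrable. For `λ ≥ λ₀` the truncated integrand `1_{x ≥ -λ} k(y, x, y, x)` splits as
`f + ℓ(y, y, 0) 1_{[-λ, 0]}(x)`, and the second summand integrates to exactly the counterterm
`λ ∫ ℓ(y, y, 0) dμ`; hence `φ_k(λ) = ∫ f` for all `λ ≥ λ₀`.
-/

open MeasureTheory Filter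

noncomputable section

/-- The truncated trace
`φ_k(λ) = ∫_{Y×[−λ,∞)} k(y, x, y, x) dμ(y) dx − λ ∫_Y ℓ(y, y, 0) dμ(y)`. -/
def phiReg {Y : Type*} [MeasurableSpace Y] (μ : Measure Y)
    (k : Y × ℝ → Y × ℝ → ℂ) (ℓ : Y → Y → ℝ → ℂ) (l : ℝ) : ℂ :=
  (∫ p : Y × ℝ, (if -l ≤ p.2 then k p p else 0) ∂(μ.prod volume)) -
    (l : ℂ) * ∫ y, ℓ y y 0 ∂μ

theorem chi_of_le {l s : ℝ} (h : s ≤ -l) : chi l s = 1 := if_pos h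

theorem chi_of_lt {l s : ℝ} (h : -l < s) : chi l s = 0 := if_neg h.not_ge

theorem chi_comp_mul_eq_indicator {X : Type*} (l : ℝ) (φ : X → ℝ) (g : X → ℂ) :
    (fun q => chi l (φ q) * g q) = {q | φ q ≤ -l}.indicator g := by
  funext q
  by_cases h : φ q ≤ -l <;> simp [chi, h]

theorem HasCompactSupport.exists_eq_zero_of_lt {X M : Type*} [TopologicalSpace X] [Zero M]
    {g : X → M} (hg : HasCompactSupport g) {φ : X → ℝ} (hφ : Continuous φ) :
    ∃ r, ∀ q, r < φ q → g q = 0 := by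
  obtain ⟨r, hr⟩ := hg.isCompact.bddAbove_image hφ.continuousOn
  exact ⟨r, fun q hq => image_eq_zero_of_notMem_tsupport fun hq' => hq.not_ge (hr ⟨q, hq', rfl⟩)⟩

namespace MemAc

variable {Y : Type*} [TopologicalSpace Y] {k : Y × ℝ → Y × ℝ → ℂ} {ℓ : Y → Y → ℝ → ℂ}

theorem continuous_diag (hk : MemAc k ℓ) : Continuous fun p : Y × ℝ => k p p :=
  hk.1.comp (continuous_id.prodMk continuous_id)

theorem exists_diag_eq_symbol (hk : MemAc k ℓ) :
    ∃ l₀ > 0, ∀ y x, x ≤ -l₀ → k (y, x) (y, x) = ℓ y y 0 := by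
  obtain ⟨-, l₀, hl₀, hsymbol, -⟩ := hk
  exact ⟨l₀, hl₀, fun y x hx => by simpa using hsymbol y x y x hx hx⟩

theorem exists_diag_eq_zero (hk : MemAc k ℓ) :
    ∃ r ≥ 0, ∀ y x, r < x → k (y, x) (y, x) = 0 := by
  obtain ⟨-, l₀, hl₀, -, hcs⟩ := hk
  obtain ⟨r, hr⟩ := hcs.exists_eq_zero_of_lt (continuous_snd.comp continuous_fst)
  refine ⟨max r 0, le_max_right _ _, fun y x hx => ?_⟩
  have hzero := hr ((y, x), (y, x)) ((le_max_left _ _).trans_lt hx)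
  simp only [and_self] at hzero
  rwa [if_neg (by linarith [le_max_right r 0])] at hzero

theorem continuous_symbol_diag (hk : MemAc k ℓ) : Continuous fun y => ℓ y y 0 := by
  obtain ⟨l₀, -, hleft⟩ := hk.exists_diag_eq_symbol
  have hcut : (fun y => ℓ y y 0) = fun y => k (y, -l₀) (y, -l₀) :=
    funext fun y => (hleft y _ le_rfl).symm
  exact hcut ▸ hk.continuous_diag.comp (continuous_id.prodMk continuous_const)

end MemAc

section DiagonalKernel

variable {Y : Type*} {k : Y × ℝ → Y × ℝ → ℂ} {ℓ : Y → Y → ℝ → ℂ} {l₀ r : ℝ}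

theorem support_diag_sub_chi_mul_subset (hl₀ : 0 ≤ l₀) (hr : 0 ≤ r)
    (hleft : ∀ y x, x ≤ -l₀ → k (y, x) (y, x) = ℓ y y 0)
    (hright : ∀ y x, r < x → k (y, x) (y, x) = 0) :
    Function.support (fun p : Y × ℝ => k p p - chi 0 p.2 * ℓ p.1 p.1 0) ⊆
      Set.univ ×ˢ Set.Icc (-l₀) r := by
  rintro ⟨y, x⟩ hne
  refine ⟨trivial, ?_, ?_⟩
  · by_contra! hx
    exact hne (by simp [hleft y x hx.le, chi_of_le (by linarith : x ≤ -0)])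
  · by_contra! hx
    exact hne (by simp [hright y x hx, chi_of_lt (by linarith : -0 < x)])

theorem integrable_diag_sub_chi_mul [TopologicalSpace Y] [CompactSpace Y] [MeasurableSpace Y]
    [OpensMeasurableSpace Y] (μ : Measure Y) [IsFiniteMeasure μ]
    (hd : Continuous fun p : Y × ℝ => k p p) (ha : Continuous fun y => ℓ y y 0)
    (hl₀ : 0 ≤ l₀) (hr : 0 ≤ r)
    (hleft : ∀ y x, x ≤ -l₀ → k (y, x) (y, x) = ℓ y y 0)
    (hright : ∀ y x, r < x → k (y, x) (y, x) = 0) :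
    Integrable (fun p : Y × ℝ => k p p - chi 0 p.2 * ℓ p.1 p.1 0) (μ.prod volume) := by
  have hK : IsCompact (Set.univ ×ˢ Set.Icc (-l₀) r : Set (Y × ℝ)) :=
    isCompact_univ.prod isCompact_Icc
  have hKm : MeasurableSet (Set.univ ×ˢ Set.Icc (-l₀) r : Set (Y × ℝ)) :=
    MeasurableSet.univ.prod measurableSet_Icc
  rw [← integrableOn_iff_integrable_of_support_subset
    (support_diag_sub_chi_mul_subset hl₀ hr hleft hright)]
  have hchi : IntegrableOn (fun p : Y × ℝ => chi 0 p.2 * ℓ p.1 p.1 0)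
      (Set.univ ×ˢ Set.Icc (-l₀) r) (μ.prod volume) := by
    rw [chi_comp_mul_eq_indicator 0 Prod.snd fun p : Y × ℝ => ℓ p.1 p.1 0]
    exact ((ha.comp continuous_fst).continuousOn.integrableOn_compact' hK hKm).indicator
      (measurableSet_le measurable_snd measurable_const)
  exact (hd.continuousOn.integrableOn_compact' hK hKm).sub hchi

theorem phiReg_eq_integral_of_le [MeasurableSpace Y] (μ : Measure Y) [SFinite μ]
    (hint : Integrable (fun p : Y × ℝ => k p p - chi 0 p.2 * ℓ p.1 p.1 0) (μ.prod volume))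
    (ha : Integrable (fun y => ℓ y y 0) μ)
    (hleft : ∀ y x, x ≤ -l₀ → k (y, x) (y, x) = ℓ y y 0) {l : ℝ} (hl₀ : 0 ≤ l₀) (hl : l₀ ≤ l) :
    phiReg μ k ℓ l = ∫ p, (k p p - chi 0 p.2 * ℓ p.1 p.1 0) ∂(μ.prod volume) := by
  have hsplit : (fun p : Y × ℝ => if -l ≤ p.2 then k p p else 0) = fun p =>
      (k p p - chi 0 p.2 * ℓ p.1 p.1 0) +
        ℓ p.1 p.1 0 * (Set.Icc (-l) 0).indicator (fun _ => (1 : ℂ)) p.2 := by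
    funext ⟨y, x⟩
    rcases lt_or_ge x (-l) with hx | hx
    · simp [hx.not_ge, hleft y x (by linarith), chi_of_le (by linarith : x ≤ -0)]
    rcases le_or_gt x 0 with hx0 | hx0
    · simp [hx, hx0, chi_of_le (by linarith : x ≤ -0)]
    · simp [hx, hx0.not_ge, chi_of_lt (by linarith : -0 < x)]
  have hind : Integrable ((Set.Icc (-l) 0).indicator fun _ : ℝ => (1 : ℂ)) :=
    (integrable_indicator_iff measurableSet_Icc).2 (integrableOn_const (by simp))
  rw [phiReg, hsplit, integral_add hint (ha.mul_prod hind),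
    integral_prod_mul (fun y => ℓ y y 0) ((Set.Icc (-l) 0).indicator fun _ => (1 : ℂ)),
    integral_indicator_const _ measurableSet_Icc, Real.volume_real_Icc_of_le (by linarith)]
  simp [mul_comm]

end DiagonalKernel

theorem regularized_trace_exists_and_integral_formula_general
    {Y : Type*} [MetricSpace Y] [CompactSpace Y] [MeasurableSpace Y] [BorelSpace Y]
    (μ : Measure Y) [IsFiniteMeasure μ]
    (k : Y × ℝ → Y × ℝ → ℂ) (ℓ : Y → Y → ℝ → ℂ)
    (hk : MemAc k ℓ) :
    ∃ c : ℂ,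
      (∃ Λ : ℝ, ∀ l ≥ Λ, phiReg μ k ℓ l = c) ∧
      Tendsto (fun l => phiReg μ k ℓ l) atTop (nhds c) ∧
      Integrable (fun p : Y × ℝ => k p p - chi 0 p.2 * ℓ p.1 p.1 0) (μ.prod volume) ∧
      c = ∫ p : Y × ℝ, (k p p - chi 0 p.2 * ℓ p.1 p.1 0) ∂(μ.prod volume) := by
  obtain ⟨l₀, hl₀, hleft⟩ := hk.exists_diag_eq_symbol
  obtain ⟨r, hr, hright⟩ := hk.exists_diag_eq_zero
  have ha := hk.continuous_symbol_diag
  have hint := integrable_diag_sub_chi_mul μ hk.continuous_diag ha hl₀.le hr hleft hright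
  have hconst : ∀ l ≥ l₀, phiReg μ k ℓ l = _ := fun l hl =>
    phiReg_eq_integral_of_le μ hint (ha.integrable_of_hasCompactSupport (.of_compactSpace _))
      hleft hl₀.le hl
  exact ⟨_, ⟨l₀, hconst⟩,
    tendsto_const_nhds.congr' ((eventually_ge_atTop l₀).mono fun l hl => (hconst l hl).symm),
    hint, rfl⟩

/-- for `k ∈ A_c(Y)` with symbol `ℓ`: (i) `φ_k` is eventually constant,
so the regularized trace `τ₀^r(k) = lim_{λ→+∞} φ_k(λ)` exists; (ii) the function
`(y, x) ↦ k(y, x, y, x) − χ⁰(x)·ℓ(y, y, 0)` is integrable on `Y × ℝ`; and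
(iii) `τ₀^r(k)` equals its integral. -/
theorem regularized_trace_exists_and_integral_formula
    {Y : Type*} [MetricSpace Y] [CompactSpace Y] [MeasurableSpace Y] [BorelSpace Y]
    (μ : Measure Y) [IsFiniteMeasure μ]
    (k : Y × ℝ → Y × ℝ → ℂ) (ℓ : Y → Y → ℝ → ℂ)
    (hℓ : MemBc ℓ) (hk : MemAc k ℓ) :
    ∃ c : ℂ,
      (∃ Λ : ℝ, ∀ l ≥ Λ, phiReg μ k ℓ l = c) ∧
      Tendsto (fun l => phiReg μ k ℓ l) atTop (nhds c) ∧
      Integrable (fun p : Y × ℝ => k p p - chi 0 p.2 * ℓ p.1 p.1 0) (μ.prod volume) ∧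
      c = ∫ p : Y × ℝ, (k p p - chi 0 p.2 * ℓ p.1 p.1 0) ∂(μ.prod volume) :=
  regularized_trace_exists_and_integral_formula_general μ k ℓ hk

end
end

section
/- Let A be an associative ℂ-algebra, let δ₁, …, δ_k be pairwise commuting derivations of A, and let τ₀ : A → ℂ be a linear functional satisfying τ₀(ab) = τ₀(ba) for all a, b ∈ A and τ₀(δᵢ(a)) = 0 for all a ∈ A and 1 ≤ i ≤ k. Define τ(a₀, a₁, …, a_k) = (1/k!) Σ_{α ∈ S_k} sign(α) τ₀(a₀ · δ_{α(1)}(a₁) ⋯ δ_{α(k)}(a_k)). Then τ satisfies the cyclicity condition τ(a_k, a₀, …, a_{k−1}) = (−1)^k τ(a₀, a₁, …, a_k) for all a₀, …, a_k ∈ A. -/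
/-!
For each `α`, the trace property of `τ₀` and `τ₀ ∘ δ = 0` move `δ_{α(k)}` from `a_k` onto the
product `a₀ · δ_{α(1)}(a₁) ⋯ δ_{α(k-1)}(a_{k-1})`. By the Leibniz rule, `δ_{α(k)}` hitting `a₀`
gives the term of the rotated cochain for `α ∘ c`, where `c` is a cyclic shift of sign
`(-1)^(k-1)`; `δ_{α(k)}` hitting `δ_{α(j)}(a_j)` gives terms which, the derivations commuting,
are invariant under `α ↦ α ∘ (j k)` and so cancel in the alternating sum.
-/

noncomputable section

/-- The cyclic `k`-cochain
`τ(a₀, …, a_k) = (1/k!) Σ_{α ∈ S_k} sign(α) τ₀(a₀ · δ_{α(1)}(a₁) ⋯ δ_{α(k)}(a_k))`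
associated to a functional `τ₀` and derivations `δ₁, …, δ_k`. -/
def tauCyc {A : Type*} [Ring A] [Algebra ℂ A] {k : ℕ}
    (τ₀ : A →ₗ[ℂ] ℂ) (δ : Fin k → A →ₗ[ℂ] A) (a : Fin (k + 1) → A) : ℂ :=
  (k.factorial : ℂ)⁻¹ *
    ∑ α : Equiv.Perm (Fin k),
      ((Equiv.Perm.sign α : ℤ) : ℂ) *
        τ₀ (a 0 * (List.ofFn fun i : Fin k => (δ (α i)) (a i.succ)).prod)

theorem Fin.zero_sub_one_eq_last (n : ℕ) : (0 : Fin (n + 1)) - 1 = Fin.last n := by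
  rw [sub_eq_iff_eq_add, Fin.last_add_one]

theorem Fin.succ_sub_one_eq_castSucc {n : ℕ} (i : Fin n) :
    (i.succ : Fin (n + 1)) - 1 = i.castSucc := by
  rw [sub_eq_iff_eq_add, Fin.coeSucc_eq_succ]

section Leibniz

variable {A F : Type*} [Ring A] [FunLike F A A]

theorem map_list_ofFn_prod_of_leibniz [AddMonoidHomClass F A A] (d : F)
    (hd : ∀ x y : A, d (x * y) = d x * y + x * d y) :
    ∀ {n : ℕ} (f : Fin n → A),
      d (List.ofFn f).prod = ∑ j, (List.ofFn (Function.update f j (d (f j)))).prod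
  | 0, _ => by simpa using hd 1 1
  | n + 1, f => by
    rw [List.ofFn_succ, List.prod_cons, hd, map_list_ofFn_prod_of_leibniz d hd, Fin.sum_univ_succ,
      Finset.mul_sum]
    congr 1
    · simp [List.ofFn_succ]
    · refine Finset.sum_congr rfl fun j _ => ?_
      rw [List.ofFn_succ, List.prod_cons, Function.update_of_ne (Fin.succ_ne_zero j).symm,
        Function.update_comp_eq_of_injective' f (Fin.succ_injective n)]

variable {M G : Type*} [AddCommGroup M] [FunLike G A M] [AddMonoidHomClass G A M]

theorem map_mul_map_of_leibniz (d : F) (hd : ∀ x y : A, d (x * y) = d x * y + x * d y)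
    (τ : G) (hvan : ∀ x, τ (d x) = 0) (x y : A) :
    τ (x * d y) = -τ (d x * y) := by
  rw [eq_neg_iff_add_eq_zero, add_comm, ← map_add, ← hd, hvan]

theorem map_mul_list_ofFn_prod_mul_map_of_leibniz [AddMonoidHomClass F A A] (d : F)
    (hd : ∀ x y : A, d (x * y) = d x * y + x * d y) (τ : G)
    (htr : ∀ x y, τ (x * y) = τ (y * x)) (hvan : ∀ x, τ (d x) = 0) (x y : A) {n : ℕ}
    (f : Fin n → A) :
    τ (x * (List.ofFn f).prod * d y) =
      -τ (y * (d x * (List.ofFn f).prod)) -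
        ∑ j, τ (y * (x * (List.ofFn (Function.update f j (d (f j)))).prod)) := by
  rw [map_mul_map_of_leibniz d hd τ hvan, htr, hd, map_list_ofFn_prod_of_leibniz d hd,
    mul_add, map_add, Finset.mul_sum, Finset.mul_sum, map_sum, neg_add, sub_eq_add_neg]

end Leibniz

namespace Equiv.Perm

variable {ι R : Type*} [DecidableEq ι] [Fintype ι] [CommRing R]

theorem sum_sign_mul_eq_zero_of_mul_swap {i j : ι} (hij : i ≠ j) (g : Perm ι → R)
    (hg : ∀ α, g (α * swap i j) = g α) :
    ∑ α, (sign α : R) * g α = 0 := by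
  refine Finset.sum_ninvolution (· * swap i j) (fun α => ?_) (fun α _ => ?_)
    (fun _ => Finset.mem_univ _) (fun α => by simp [mul_assoc])
  · simp [hg, sign_swap hij]
  · simpa [mul_swap_eq_iff] using hij

theorem sum_sign_mul_eq_sign_mul_sum_mul_right (σ : Perm ι) (g : Perm ι → R) :
    ∑ α, (sign α : R) * g α = sign σ * ∑ α, (sign α : R) * g (α * σ) := by
  rw [← Fintype.sum_equiv (Equiv.mulRight σ) (fun α => (sign (α * σ) : R) * g (α * σ)) _
    fun _ => rfl, Finset.mul_sum]
  refine Finset.sum_congr rfl fun α _ => ?_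
  simp only [sign_mul, Units.val_mul, Int.cast_mul]
  ring

end Equiv.Perm

open Equiv Perm

theorem sum_sign_mul_sum_update_comm_eq_zero {A R : Type*} [CommRing R] {m : ℕ}
    (δ : Fin (m + 1) → A → A) (hcomm : ∀ i j a, δ i (δ j a) = δ j (δ i a))
    (b : Fin m → A) (Φ : (Fin m → A) → R) :
    ∑ α : Perm (Fin (m + 1)), (sign α : R) * ∑ j, Φ (Function.update
      (fun i => δ (α i.castSucc) (b i)) j (δ (α (Fin.last m)) (δ (α j.castSucc) (b j)))) = 0 := by
  simp only [Finset.mul_sum]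
  rw [Finset.sum_comm]
  refine Finset.sum_eq_zero fun j _ =>
    sum_sign_mul_eq_zero_of_mul_swap (Fin.castSucc_lt_last j).ne _ fun α => ?_
  congr 1
  funext i
  rcases eq_or_ne i j with rfl | hij
  · simp [hcomm]
  · simp [Function.update_of_ne hij, swap_apply_of_ne_of_ne
      (Fin.castSucc_injective _ |>.ne hij) (Fin.castSucc_lt_last i).ne]

section Shift

variable {R A F G : Type*} [CommRing R] [Ring A] [FunLike F A A] [AddMonoidHomClass F A A]
  [FunLike G A R] [AddMonoidHomClass G A R] {m : ℕ}

theorem sum_sign_mul_map_prod_cyclic (δ : Fin (m + 1) → F)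
    (hder : ∀ i (x y : A), δ i (x * y) = δ i x * y + x * δ i y)
    (hcomm : ∀ i j (x : A), δ i (δ j x) = δ j (δ i x))
    (τ : G) (htr : ∀ x y : A, τ (x * y) = τ (y * x)) (hvan : ∀ i (x : A), τ (δ i x) = 0)
    (a : Fin (m + 2) → A) :
    ∑ α : Perm (Fin (m + 1)), (sign α : R) *
        τ (a (Fin.last (m + 1)) * (List.ofFn fun i => δ (α i) (a i.castSucc)).prod) =
      (-1) ^ (m + 1) * ∑ α : Perm (Fin (m + 1)), (sign α : R) *
        τ (a 0 * (List.ofFn fun i => δ (α i) (a i.succ)).prod) := by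
  set c : Perm (Fin (m + 1)) := (finRotate (m + 1)).symm
  have hc0 : c 0 = Fin.last m := by
    simp only [c, finRotate_symm_apply, Fin.zero_sub_one_eq_last]
  have hcsucc (i : Fin m) : c i.succ = i.castSucc := by
    simp only [c, finRotate_symm_apply, Fin.succ_sub_one_eq_castSucc]
  have hc : (sign c : R) = (-1) ^ m := by simp [c, sign_finRotate]
  set M : Perm (Fin (m + 1)) → Fin m → A := fun α i => δ (α i.castSucc) (a i.castSucc.succ)
  have hparts (α : Perm (Fin (m + 1))) :
      τ (a 0 * (List.ofFn fun i => δ (α i) (a i.succ)).prod) =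
        -τ (a (Fin.last (m + 1)) * (List.ofFn fun i => δ ((α * c) i) (a i.castSucc)).prod) -
          ∑ j, τ (a (Fin.last (m + 1)) * (a 0 * (List.ofFn (Function.update (M α) j
            (δ (α (Fin.last m)) (M α j)))).prod)) := by
    rw [List.ofFn_succ', List.prod_concat, ← mul_assoc,
      map_mul_list_ofFn_prod_mul_map_of_leibniz _ (hder _) τ htr (hvan _), List.ofFn_succ,
      List.prod_cons]
    simp only [Perm.mul_apply, hc0, hcsucc, Fin.succ_last, Fin.castSucc_zero, Fin.succ_castSucc]
    rfl
  have hcancel := sum_sign_mul_sum_update_comm_eq_zero (fun i => ⇑(δ i)) hcomm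
    (fun i => a i.castSucc.succ) fun v => τ (a (Fin.last (m + 1)) * (a 0 * (List.ofFn v).prod))
  simp only [hparts, mul_sub, mul_neg, Finset.sum_sub_distrib, Finset.sum_neg_distrib]
  rw [hcancel, sum_sign_mul_eq_sign_mul_sum_mul_right c, hc]
  ring

end Shift

/-- if `δ₁, …, δ_k` are pairwise commuting derivations of an associative
`ℂ`-algebra `A` and `τ₀` is a trace vanishing on the images of the `δᵢ`, then the
cochain `τ` satisfies the cyclicity condition
`τ(a_k, a₀, …, a_{k−1}) = (−1)^k τ(a₀, a₁, …, a_k)`. -/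
theorem tauCyc_cyclic {A : Type*} [Ring A] [Algebra ℂ A] {k : ℕ}
    (δ : Fin k → A →ₗ[ℂ] A)
    (hder : ∀ i (a b : A), δ i (a * b) = δ i a * b + a * δ i b)
    (hcomm : ∀ i j (a : A), δ i (δ j a) = δ j (δ i a))
    (τ₀ : A →ₗ[ℂ] ℂ)
    (htr : ∀ a b : A, τ₀ (a * b) = τ₀ (b * a))
    (hvan : ∀ i (a : A), τ₀ (δ i a) = 0)
    (a : Fin (k + 1) → A) :
    tauCyc τ₀ δ (fun i => a (i - 1)) = (-1 : ℂ) ^ k * tauCyc τ₀ δ a := by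
  cases k with
  | zero => simp [tauCyc]
  | succ m =>
    simp only [tauCyc, Fin.zero_sub_one_eq_last, Fin.succ_sub_one_eq_castSucc,
      sum_sign_mul_map_prod_cyclic δ hder hcomm τ₀ htr hvan a]
    ring

end
end

section
/- Let A be an associative ℂ-algebra, let δ₁, …, δ_k be pairwise commuting derivations of A, and let τ₀ : A → ℂ be a linear functional satisfying τ₀(ab) = τ₀(ba) for all a, b ∈ A and τ₀(δᵢ(a)) = 0 for all a ∈ A and 1 ≤ i ≤ k. Define τ(a₀, a₁, …, a_k) = (1/k!) Σ_{α ∈ S_k} sign(α) τ₀(a₀ · δ_{α(1)}(a₁) ⋯ δ_{α(k)}(a_k)). Then the Hochschild coboundary of τ vanishes: for all a₀, …, a_{k+1} ∈ A, Σ_{j=0}^{k} (−1)^j τ(a₀, …, a_j a_{j+1}, …, a_{k+1}) + (−1)^{k+1} τ(a_{k+1} a₀, a₁, …, a_k) = 0. Hence τ is a cyclic k-cocycle on A. -/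
/-!
For a fixed permutation α the maps `δ_{α(i)}` only enter through the Leibniz rule. Expanding
`δ(a_j a_{j+1}) = δ(a_j) a_{j+1} + a_j δ(a_{j+1})`, the alternating sum over the merge positions
telescopes to `(-1)^k a₀ δ(a₁) ⋯ δ(a_k) a_{k+1}`, and the trace property identifies `τ₀` of this
with `τ₀(a_{k+1} a₀ δ(a₁) ⋯ δ(a_k))`, the last term of the coboundary, which carries the
opposite sign.
-/

noncomputable section

/-- The tuple `(a₀, …, a_j a_{j+1}, …, a_{k+1})` obtained from `(a₀, …, a_{k+1})`
by multiplying the `j`-th and `(j+1)`-st entries. -/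
def mergeAt {A : Type*} [Mul A] {k : ℕ} (a : Fin (k + 2) → A) (j : Fin (k + 1)) :
    Fin (k + 1) → A := fun i =>
  if (i : ℕ) < (j : ℕ) then a (Fin.castSucc i)
  else if (i : ℕ) = (j : ℕ) then a (Fin.castSucc i) * a i.succ
  else a i.succ

/-- The tuple `(a_{k+1} a₀, a₁, …, a_k)`. -/
def lastMerge {A : Type*} [Mul A] {k : ℕ} (a : Fin (k + 2) → A) :
    Fin (k + 1) → A := fun i =>
  if i = 0 then a (Fin.last (k + 1)) * a 0 else a (Fin.castSucc i)

section Merge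

variable {A : Type*} [Mul A]

theorem mergeAt_zero {k : ℕ} (a : Fin (k + 2) → A) :
    mergeAt a 0 = Fin.cons (a 0 * a 1) (Fin.tail (Fin.tail a)) := by
  ext i
  refine Fin.cases ?_ (fun i => ?_) i
  · simp [mergeAt]
  · simp [mergeAt, Fin.tail]

theorem mergeAt_succ {k : ℕ} (a : Fin (k + 3) → A) (j : Fin (k + 1)) :
    mergeAt a j.succ = Fin.cons (a 0) (mergeAt (Fin.tail a) j) := by
  ext i
  refine Fin.cases ?_ (fun i => ?_) i
  · simp [mergeAt]
  · simp [mergeAt, Fin.tail]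

theorem lastMerge_eq_cons {k : ℕ} (a : Fin (k + 2) → A) :
    lastMerge a = Fin.cons (a (Fin.last _) * a 0) (Fin.tail (Fin.init a)) := by
  ext i
  refine Fin.cases ?_ (fun i => ?_) i
  · simp [lastMerge]
  · simp [lastMerge, Fin.tail, Fin.init, Fin.succ_ne_zero]

end Merge

section Telescoping

variable {A : Type*} [Ring A]

def derivProd {m : ℕ} (d : Fin m → A → A) (b : Fin m → A) : A :=
  (List.ofFn fun i => d i (b i)).prod

@[simp]
theorem derivProd_zero (d : Fin 0 → A → A) (b : Fin 0 → A) : derivProd d b = 1 := rfl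

theorem derivProd_succ {m : ℕ} (d : Fin (m + 1) → A → A) (b : Fin (m + 1) → A) :
    derivProd d b = d 0 (b 0) * derivProd (Fin.tail d) (Fin.tail b) := by
  simp [derivProd, List.ofFn_succ, Fin.tail]

theorem sum_neg_one_pow_mul_derivProd_mergeAt {m : ℕ} (d : Fin (m + 1) → A → A)
    (hd : ∀ i x y, d i (x * y) = d i x * y + x * d i y) (b : Fin (m + 2) → A) :
    ∑ j : Fin (m + 1), (-1) ^ (j : ℕ) * derivProd d (mergeAt b j)
      = b 0 * derivProd d (Fin.tail b)
        + (-1) ^ m * derivProd d (Fin.init b) * b (Fin.last _) := by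
  induction m with
  | zero =>
    rw [Fin.sum_univ_one, mergeAt_zero, derivProd_succ, derivProd_succ, derivProd_succ,
      Fin.cons_zero, hd]
    simp only [derivProd_zero, Fin.val_zero, pow_zero, one_mul, mul_one]
    exact add_comm _ _
  | succ m ih =>
    have htail : ∑ j : Fin (m + 1), (-1) ^ (j.succ : ℕ) * derivProd d (mergeAt b j.succ)
        = -(d 0 (b 0) * ∑ j : Fin (m + 1),
            (-1) ^ (j : ℕ) * derivProd (Fin.tail d) (mergeAt (Fin.tail b) j)) := by
      simp only [mergeAt_succ, derivProd_succ d (Fin.cons _ _), Fin.cons_zero, Fin.tail_cons,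
        Finset.mul_sum, ← Finset.sum_neg_distrib, Fin.val_succ]
      refine Finset.sum_congr rfl fun j _ => ?_
      rw [pow_succ, mul_neg_one, neg_mul, ((Commute.neg_one_left _).pow_left _).left_comm]
    rw [Fin.sum_univ_succ, htail, ih (Fin.tail d) (fun i => hd i.succ),
      mergeAt_zero, derivProd_succ d, derivProd_succ d, derivProd_succ d, Fin.tail_cons,
      Fin.cons_zero, hd, Fin.tail_init_eq_init_tail, Fin.val_zero, pow_succ]
    simp only [Fin.tail, Fin.init, Fin.succ_zero_eq_one, Fin.succ_last, Fin.castSucc_zero]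
    rcases neg_one_pow_eq_or A m with h | h <;> rw [h] <;> noncomm_ring

theorem sum_neg_one_pow_mul_mergeAt_mul_derivProd {k : ℕ} (d : Fin k → A → A)
    (hd : ∀ i x y, d i (x * y) = d i x * y + x * d i y) (a : Fin (k + 2) → A) :
    ∑ j : Fin (k + 1), (-1) ^ (j : ℕ) * (mergeAt a j 0 * derivProd d (Fin.tail (mergeAt a j)))
      = (-1) ^ k * (a 0 * derivProd d (Fin.tail (Fin.init a)) * a (Fin.last _)) := by
  cases k with
  | zero => simp [mergeAt_zero]
  | succ m =>
    have htail : ∑ j : Fin (m + 1),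
          (-1) ^ (j.succ : ℕ) * (mergeAt a j.succ 0 * derivProd d (Fin.tail (mergeAt a j.succ)))
        = -(a 0 * ∑ j : Fin (m + 1), (-1) ^ (j : ℕ) * derivProd d (mergeAt (Fin.tail a) j)) := by
      simp only [mergeAt_succ, Fin.cons_zero, Fin.tail_cons, Finset.mul_sum,
        ← Finset.sum_neg_distrib, Fin.val_succ]
      refine Finset.sum_congr rfl fun j _ => ?_
      rw [pow_succ, mul_neg_one, neg_mul, ((Commute.neg_one_left _).pow_left _).left_comm]
    rw [Fin.sum_univ_succ, htail, sum_neg_one_pow_mul_derivProd_mergeAt d hd, mergeAt_zero,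
      Fin.cons_zero, Fin.tail_cons, Fin.tail_init_eq_init_tail, Fin.val_zero, pow_succ]
    simp only [Fin.tail, Fin.succ_zero_eq_one, Fin.succ_last]
    rcases neg_one_pow_eq_or A m with h | h <;> rw [h] <;> noncomm_ring

end Telescoping

theorem map_neg_one_pow_mul {A R : Type*} [Ring A] [Ring R] (f : A →+ R) (n : ℕ) (x : A) :
    f ((-1) ^ n * x) = (-1) ^ n * f x := by
  rcases n.even_or_odd with h | h <;> simp [h.neg_one_pow]

section Coboundary

variable {A R : Type*} [Mul A] [CommRing R] {k : ℕ}

def hochschildCoboundary (τ : (Fin (k + 1) → A) → R) (a : Fin (k + 2) → A) : R :=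
  (∑ j : Fin (k + 1), (-1) ^ (j : ℕ) * τ (mergeAt a j)) + (-1) ^ (k + 1) * τ (lastMerge a)

theorem hochschildCoboundary_mul_sum {ι : Type*} (s : Finset ι) (c : R) (w : ι → R)
    (τ : ι → (Fin (k + 1) → A) → R) (a : Fin (k + 2) → A) :
    hochschildCoboundary (fun b => c * ∑ i ∈ s, w i * τ i b) a
      = c * ∑ i ∈ s, w i * hochschildCoboundary (τ i) a := by
  simp only [hochschildCoboundary, Finset.mul_sum, mul_add]
  rw [Finset.sum_comm, ← Finset.sum_add_distrib]
  refine Finset.sum_congr rfl fun i _ => ?_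
  congr 1
  · exact Finset.sum_congr rfl fun j _ => by ring
  · ring

end Coboundary

theorem hochschildCoboundary_trace_mul_derivProd_eq_zero {A R : Type*} [Ring A] [CommRing R]
    {k : ℕ} (τ₀ : A →+ R) (htr : ∀ x y, τ₀ (x * y) = τ₀ (y * x))
    (d : Fin k → A → A) (hd : ∀ i x y, d i (x * y) = d i x * y + x * d i y)
    (a : Fin (k + 2) → A) :
    hochschildCoboundary (fun b => τ₀ (b 0 * derivProd d (Fin.tail b))) a = 0 := by
  have hlast : τ₀ (lastMerge a 0 * derivProd d (Fin.tail (lastMerge a)))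
      = τ₀ (a 0 * derivProd d (Fin.tail (Fin.init a)) * a (Fin.last _)) := by
    rw [lastMerge_eq_cons, Fin.cons_zero, Fin.tail_cons, mul_assoc, htr]
  rw [hochschildCoboundary, hlast, pow_succ, mul_neg_one, neg_mul]
  simp only [← map_neg_one_pow_mul, ← map_sum, sum_neg_one_pow_mul_mergeAt_mul_derivProd d hd,
    add_neg_cancel]

theorem tauCyc_hochschild_coboundary_eq_zero_general {A : Type*} [Ring A] [Algebra ℂ A] {k : ℕ}
    (δ : Fin k → A →ₗ[ℂ] A)
    (hder : ∀ i (a b : A), δ i (a * b) = δ i a * b + a * δ i b)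
    (τ₀ : A →ₗ[ℂ] ℂ)
    (htr : ∀ a b : A, τ₀ (a * b) = τ₀ (b * a))
    (a : Fin (k + 2) → A) :
    (∑ j : Fin (k + 1), (-1 : ℂ) ^ (j : ℕ) * tauCyc τ₀ δ (mergeAt a j)) +
      (-1 : ℂ) ^ (k + 1) * tauCyc τ₀ δ (lastMerge a) = 0 := by
  have hτ : tauCyc τ₀ δ = fun b => (k.factorial : ℂ)⁻¹ * ∑ α : Equiv.Perm (Fin k),
      ((Equiv.Perm.sign α : ℤ) : ℂ) * τ₀ (b 0 * derivProd (fun i => δ (α i)) (Fin.tail b)) :=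
    rfl
  change hochschildCoboundary (tauCyc τ₀ δ) a = 0
  rw [hτ, hochschildCoboundary_mul_sum]
  have hvanish : ∀ α : Equiv.Perm (Fin k), hochschildCoboundary
      (fun b => τ₀ (b 0 * derivProd (fun i => δ (α i)) (Fin.tail b))) a = 0 := fun α =>
    hochschildCoboundary_trace_mul_derivProd_eq_zero τ₀.toAddMonoidHom htr _
      (fun i => hder (α i)) a
  simp only [hvanish, mul_zero, Finset.sum_const_zero]

/-- if `δ₁, …, δ_k` are pairwise commuting derivations of an associative
`ℂ`-algebra `A` and `τ₀` is a trace vanishing on the images of the `δᵢ`, then the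
Hochschild coboundary of the cochain `τ` vanishes:
`Σ_{j=0}^{k} (−1)^j τ(a₀, …, a_j a_{j+1}, …, a_{k+1})
  + (−1)^{k+1} τ(a_{k+1} a₀, a₁, …, a_k) = 0`. -/
theorem tauCyc_hochschild_coboundary_eq_zero {A : Type*} [Ring A] [Algebra ℂ A] {k : ℕ}
    (δ : Fin k → A →ₗ[ℂ] A)
    (hder : ∀ i (a b : A), δ i (a * b) = δ i a * b + a * δ i b)
    (hcomm : ∀ i j (a : A), δ i (δ j a) = δ j (δ i a))
    (τ₀ : A →ₗ[ℂ] ℂ)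
    (htr : ∀ a b : A, τ₀ (a * b) = τ₀ (b * a))
    (hvan : ∀ i (a : A), τ₀ (δ i a) = 0)
    (a : Fin (k + 2) → A) :
    (∑ j : Fin (k + 1), (-1 : ℂ) ^ (j : ℕ) * tauCyc τ₀ δ (mergeAt a j)) +
      (-1 : ℂ) ^ (k + 1) * tauCyc τ₀ δ (lastMerge a) = 0 :=
  tauCyc_hochschild_coboundary_eq_zero_general δ hder τ₀ htr a

end
end

section
/- Let A be an associative ℂ-algebra, let δ₁, δ₂ be commuting derivations of A, and let φ : A → ℂ be a linear functional (not assumed tracial) satisfying φ(δ₁(a)) = 0 and φ(δ₂(a)) = 0 for all a ∈ A. Define ψ(a₀, a₁, a₂) = φ(a₀ δ₁(a₁) δ₂(a₂)) − φ(a₀ δ₂(a₁) δ₁(a₂)) and the cyclic symmetrization τ(a₀, a₁, a₂) = ψ(a₀, a₁, a₂) + ψ(a₁, a₂, a₀) + ψ(a₂, a₀, a₁). Then for all a₀, a₁, a₂, a₃ ∈ A the Hochschild coboundary of τ is given by (bτ)(a₀, a₁, a₂, a₃) = φ([Λ₁, a₃]) + φ([Λ₂, a₁]) + φ([Λ₃,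 a₂]), where [x, y] = xy − yx, Λ₁ = a₀(δ₁(a₁)δ₂(a₂) − δ₂(a₁)δ₁(a₂)), Λ₂ = (δ₁(a₂)δ₂(a₃) − δ₂(a₂)δ₁(a₃))a₀, and Λ₃ = δ₁(a₃)a₀δ₂(a₁) − δ₂(a₃)a₀δ₁(a₁). -/
noncomputable section

/-- `ψ(x, y, z) = φ(x δ₁(y) δ₂(z)) − φ(x δ₂(y) δ₁(z))`. -/
def psiGV {A : Type*} [Ring A] [Algebra ℂ A]
    (φ : A →ₗ[ℂ] ℂ) (δ₁ δ₂ : A →ₗ[ℂ] A) (x y z : A) : ℂ :=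
  φ (x * δ₁ y * δ₂ z) - φ (x * δ₂ y * δ₁ z)

/-- The cyclic symmetrization `τ(x, y, z) = ψ(x, y, z) + ψ(y, z, x) + ψ(z, x, y)`. -/
def tauGV3 {A : Type*} [Ring A] [Algebra ℂ A]
    (φ : A →ₗ[ℂ] ℂ) (δ₁ δ₂ : A →ₗ[ℂ] A) (x y z : A) : ℂ :=
  psiGV φ δ₁ δ₂ x y z + psiGV φ δ₁ δ₂ y z x + psiGV φ δ₁ δ₂ z x y

/-- for commuting derivations `δ₁, δ₂` and a (not necessarily tracial)
functional `φ` vanishing on their images, the Hochschild coboundary of `τ` is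
`(bτ)(a₀, a₁, a₂, a₃) = φ([Λ₁, a₃]) + φ([Λ₂, a₁]) + φ([Λ₃, a₂])`. -/
theorem tauGV3_coboundary_formula {A : Type*} [Ring A] [Algebra ℂ A]
    (δ₁ δ₂ : A →ₗ[ℂ] A)
    (h₁ : ∀ a b : A, δ₁ (a * b) = δ₁ a * b + a * δ₁ b)
    (h₂ : ∀ a b : A, δ₂ (a * b) = δ₂ a * b + a * δ₂ b)
    (hcomm : ∀ a : A, δ₁ (δ₂ a) = δ₂ (δ₁ a))
    (φ : A →ₗ[ℂ] ℂ)
    (hφ₁ : ∀ a : A, φ (δ₁ a) = 0) (hφ₂ : ∀ a : A, φ (δ₂ a) = 0)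
    (a₀ a₁ a₂ a₃ : A) :
    tauGV3 φ δ₁ δ₂ (a₀ * a₁) a₂ a₃ - tauGV3 φ δ₁ δ₂ a₀ (a₁ * a₂) a₃ +
        tauGV3 φ δ₁ δ₂ a₀ a₁ (a₂ * a₃) - tauGV3 φ δ₁ δ₂ (a₃ * a₀) a₁ a₂ =
      φ ((a₀ * (δ₁ a₁ * δ₂ a₂ - δ₂ a₁ * δ₁ a₂)) * a₃ -
          a₃ * (a₀ * (δ₁ a₁ * δ₂ a₂ - δ₂ a₁ * δ₁ a₂))) +
        φ (((δ₁ a₂ * δ₂ a₃ - δ₂ a₂ * δ₁ a₃) * a₀) * a₁ -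
            a₁ * ((δ₁ a₂ * δ₂ a₃ - δ₂ a₂ * δ₁ a₃) * a₀)) +
        φ ((δ₁ a₃ * a₀ * δ₂ a₁ - δ₂ a₃ * a₀ * δ₁ a₁) * a₂ -
            a₂ * (δ₁ a₃ * a₀ * δ₂ a₁ - δ₂ a₃ * a₀ * δ₁ a₁)) := by
  have key₁ := hφ₁ (-(a₂ * δ₂ a₃ * a₀ * a₁) - a₃ * a₀ * δ₂ a₁ * a₂)
  have key₂ := hφ₂ (a₂ * δ₁ a₃ * a₀ * a₁ + a₃ * a₀ * δ₁ a₁ * a₂)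
  simp only [tauGV3, psiGV, h₁, h₂, hcomm, map_add, map_sub, map_neg, mul_add, add_mul,
    mul_sub, sub_mul, mul_assoc, neg_mul, mul_neg, neg_neg, map_zero] at key₁ key₂ ⊢
  linear_combination key₁ + key₂

end
end

section
/- Let H be a complex Hilbert space and D ⊆ H a dense linear subspace. Let f : D → H and g : D → H be linear maps satisfying ⟨f ξ, η⟩ = ⟨ξ, g η⟩ for all ξ, η ∈ D. Let (k_i) be a sequence of bounded linear operators on H with operator norms ‖k_i‖ → 0, and let (c_i) be bounded linear operators on H such that ⟨c_i ξ, η⟩ = ⟨k_i ξ, g η⟩ − ⟨f ξ, k_i^* η⟩ for all ξ, η ∈ D (so c_i represents the commutator [f, k_i]). If ‖c_i − c‖ → 0 for some bounded operator c, then c = 0. Consequently, the commutator derivation k ↦ [f, k] is closable with respect to any norms dominating the operator norm. -/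
open scoped InnerProductSpace

/-- Let `H` be a complex Hilbert space, `D ⊆ H` a dense subspace,
`f, g : D → H` linear with `⟨f ξ, η⟩ = ⟨ξ, g η⟩` on `D`.  If `k_i` are bounded
operators with `‖k_i‖ → 0` and `c_i` are bounded operators representing the
commutators `[f, k_i]` (i.e. `⟨c_i ξ, η⟩ = ⟪k_i ξ, g η⟫ − ⟪f ξ, k_i* η⟫` on `D`),
and `‖c_i − c‖ → 0`, then `c = 0`.  Hence `k ↦ [f, k]` is closable. -/
theorem commutator_derivation_closable
    {H : Type*} [NormedAddCommGroup H] [InnerProductSpace ℂ H] [CompleteSpace H]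
    (D : Submodule ℂ H) (hD : Dense (D : Set H))
    (f g : D →ₗ[ℂ] H)
    (hfg : ∀ ξ η : D, ⟪f ξ, (η : H)⟫_ℂ = ⟪(ξ : H), g η⟫_ℂ)
    (k : ℕ → H →L[ℂ] H)
    (hk : Filter.Tendsto (fun i => ‖k i‖) Filter.atTop (nhds 0))
    (c : ℕ → H →L[ℂ] H)
    (hc : ∀ i (ξ η : D),
      ⟪c i (ξ : H), (η : H)⟫_ℂ =
        ⟪k i (ξ : H), g η⟫_ℂ - ⟪f ξ, ContinuousLinearMap.adjoint (k i) (η : H)⟫_ℂ)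
    (c' : H →L[ℂ] H)
    (hcc : Filter.Tendsto (fun i => ‖c i - c'‖) Filter.atTop (nhds 0)) :
    c' = 0 := by
  -- Step 1: for ξ η ∈ D, ⟪c' ξ, η⟫ = 0.
  have key : ∀ ξ η : D, ⟪c' (ξ : H), (η : H)⟫_ℂ = 0 := by
    intro ξ η
    -- the sequence ⟪c i ξ, η⟫ tends to ⟪c' ξ, η⟫
    have h1 : Filter.Tendsto (fun i => ⟪c i (ξ : H), (η : H)⟫_ℂ)
        Filter.atTop (nhds ⟪c' (ξ : H), (η : H)⟫_ℂ) := by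
      have hnorm : Filter.Tendsto (fun i => ‖⟪c i (ξ : H), (η : H)⟫_ℂ -
          ⟪c' (ξ : H), (η : H)⟫_ℂ‖) Filter.atTop (nhds 0) := by
        have hb : ∀ i, ‖⟪c i (ξ : H), (η : H)⟫_ℂ - ⟪c' (ξ : H), (η : H)⟫_ℂ‖ ≤
            ‖c i - c'‖ * (‖(ξ : H)‖ * ‖(η : H)‖) := by
          intro i
          have : ⟪c i (ξ : H), (η : H)⟫_ℂ - ⟪c' (ξ : H), (η : H)⟫_ℂ =
              ⟪(c i - c') (ξ : H), (η : H)⟫_ℂ := by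
            simp [inner_sub_left]
          rw [this]
          calc ‖⟪(c i - c') (ξ : H), (η : H)⟫_ℂ‖
              ≤ ‖(c i - c') (ξ : H)‖ * ‖(η : H)‖ := norm_inner_le_norm _ _
            _ ≤ (‖c i - c'‖ * ‖(ξ : H)‖) * ‖(η : H)‖ := by
                gcongr; exact (c i - c').le_opNorm _
            _ = ‖c i - c'‖ * (‖(ξ : H)‖ * ‖(η : H)‖) := by ring
        have hlim : Filter.Tendsto (fun i => ‖c i - c'‖ * (‖(ξ : H)‖ * ‖(η : H)‖))
            Filter.atTop (nhds 0) := by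
          simpa using hcc.mul_const (‖(ξ : H)‖ * ‖(η : H)‖)
        exact squeeze_zero (fun i => norm_nonneg _) hb hlim
      have := (tendsto_zero_iff_norm_tendsto_zero
        (f := fun i => ⟪c i (ξ : H), (η : H)⟫_ℂ - ⟪c' (ξ : H), (η : H)⟫_ℂ)).mpr hnorm
      simpa using this.add_const ⟪c' (ξ : H), (η : H)⟫_ℂ
    -- the sequence also tends to 0
    have h2 : Filter.Tendsto (fun i => ⟪c i (ξ : H), (η : H)⟫_ℂ)
        Filter.atTop (nhds 0) := by
      rw [tendsto_zero_iff_norm_tendsto_zero]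
      have hb : ∀ i, ‖⟪c i (ξ : H), (η : H)⟫_ℂ‖ ≤
          ‖k i‖ * (‖(ξ : H)‖ * ‖g η‖ + ‖f ξ‖ * ‖(η : H)‖) := by
        intro i
        rw [hc i ξ η]
        calc ‖⟪k i (ξ : H), g η⟫_ℂ - ⟪f ξ, ContinuousLinearMap.adjoint (k i) (η : H)⟫_ℂ‖
            ≤ ‖⟪k i (ξ : H), g η⟫_ℂ‖ + ‖⟪f ξ, ContinuousLinearMap.adjoint (k i) (η : H)⟫_ℂ‖ :=
              norm_sub_le _ _
          _ ≤ ‖k i (ξ : H)‖ * ‖g η‖ + ‖f ξ‖ * ‖ContinuousLinearMap.adjoint (k i) (η : H)‖ := by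
              gcongr <;> exact norm_inner_le_norm _ _
          _ ≤ (‖k i‖ * ‖(ξ : H)‖) * ‖g η‖ +
              ‖f ξ‖ * (‖ContinuousLinearMap.adjoint (k i)‖ * ‖(η : H)‖) := by
              gcongr
              · exact (k i).le_opNorm _
              · exact (ContinuousLinearMap.adjoint (k i)).le_opNorm _
          _ = ‖k i‖ * (‖(ξ : H)‖ * ‖g η‖ + ‖f ξ‖ * ‖(η : H)‖) := by
              rw [LinearIsometryEquiv.norm_map ContinuousLinearMap.adjoint (k i)]; ring
      have hlim : Filter.Tendsto
          (fun i => ‖k i‖ * (‖(ξ : H)‖ * ‖g η‖ + ‖f ξ‖ * ‖(η : H)‖))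
          Filter.atTop (nhds 0) := by
        simpa using hk.mul_const _
      exact squeeze_zero (fun i => norm_nonneg _) hb hlim
    exact tendsto_nhds_unique h1 h2
  -- Step 2: extend by density in η: c' ξ = 0 for ξ ∈ D.
  have keyξ : ∀ ξ : D, c' (ξ : H) = 0 := by
    intro ξ
    have : ∀ y : H, ⟪c' (ξ : H), y⟫_ℂ = 0 := by
      intro y
      have hcont : Continuous fun y : H => ⟪c' (ξ : H), y⟫_ℂ :=
        continuous_const.inner continuous_id
      have heq : Set.EqOn (fun y : H => ⟪c' (ξ : H), y⟫_ℂ) (fun _ => (0 : ℂ))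
          (D : Set H) := fun y hy => key ξ ⟨y, hy⟩
      have := Continuous.ext_on hD hcont continuous_const heq
      exact congrFun this y
    exact inner_self_eq_zero.mp (this (c' (ξ : H)))
  -- Step 3: extend by density in ξ.
  ext x
  have hcont : Continuous fun x : H => c' x := c'.continuous
  have heq : Set.EqOn (fun x : H => c' x) (fun _ => (0 : H)) (D : Set H) :=
    fun x hx => keyξ ⟨x, hx⟩
  have := Continuous.ext_on hD hcont continuous_const heq
  simpa using congrFun this x
end

section
/- Let A be a unital associative ring, let p ∈ A be an idempotent (p² = p), and let ℓ₁, …, ℓ_t ∈ A with t ≥ 1. Then p ℓ₁ p ℓ₂ p ⋯ p ℓ_t p − p (ℓ₁ ℓ₂ ⋯ ℓ_t) p can be written as a sum of at most 2^{t−1} − 1 terms, each of the form ± p x₁ x₂ ⋯ x_t p where each factor x_i is either ℓ_i or the commutator [p, ℓ_i] = pℓ_i − ℓ_i p, and in each term at least one factor is a commutator [p, ℓ_i]. (For t = 2 this is the identity pℓ₁pℓ₂p − pℓ₁ℓ₂p = −p[p,ℓ₁][p,ℓ₂]p.) -/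
private lemma idem_expand_aux {A : Type*} [Ring A] (p : A) (hp : p * p = p) :
    ∀ (t : ℕ) (ℓ : Fin t → A) (a : A),
      (p * a * p) * (List.ofFn fun i => ℓ i * p).prod =
        ∑ ε : Fin t → Bool,
          p * a * (List.ofFn fun i =>
            if ε i then p * ℓ i - ℓ i * p else ℓ i).prod * p := by
  intro t
  induction t with
  | zero =>
    intro ℓ a
    simp
  | succ s ih =>
    intro ℓ a
    have key : ∀ b c : A, p * b * p * (c * p)
        = p * (b * c) * p + p * (b * (p * c - c * p)) * p := by
      intro b c
      have h1 : p * (b * (p * c - c * p)) * p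
          = p * b * p * (c * p) - p * (b * c) * (p * p) := by noncomm_ring
      rw [h1, hp]
      abel
    rw [List.ofFn_succ, List.prod_cons, ← mul_assoc, key]
    rw [add_mul, ih (fun i => ℓ i.succ) (a * ℓ 0),
      ih (fun i => ℓ i.succ) (a * (p * ℓ 0 - ℓ 0 * p))]
    rw [← Fintype.sum_equiv (Fin.consEquiv (fun _ : Fin (s+1) => Bool))
      (fun q : Bool × (Fin s → Bool) =>
        p * a * (List.ofFn fun i : Fin (s+1) =>
          if (Fin.cons (α := fun _ => Bool) q.1 q.2 i) then p * ℓ i - ℓ i * p else ℓ i).prod * p)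
      (fun ε => p * a * (List.ofFn fun i : Fin (s+1) =>
          if ε i then p * ℓ i - ℓ i * p else ℓ i).prod * p)
      (fun q => rfl)]
    rw [Fintype.sum_prod_type, Fintype.sum_bool, add_comm]
    congr 1 <;>
    · refine Finset.sum_congr rfl fun ε _ => ?_
      simp [List.ofFn_succ, Fin.cons_zero, Fin.cons_succ, mul_assoc]

/-- for an idempotent `p` in a unital ring `A` and `ℓ₁, …, ℓ_t ∈ A`
(`t ≥ 1`), the difference `p ℓ₁ p ℓ₂ p ⋯ p ℓ_t p − p (ℓ₁ ℓ₂ ⋯ ℓ_t) p` is a sum of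
at most `2^{t−1} − 1` terms, each of the form `± p x₁ x₂ ⋯ x_t p` where each `x_i`
is either `ℓ_i` or the commutator `[p, ℓ_i] = p ℓ_i − ℓ_i p`, and in each term at
least one factor is a commutator. -/
theorem idempotent_product_expansion {A : Type*} [Ring A] (p : A) (hp : p * p = p)
    {t : ℕ} (ht : 1 ≤ t) (ℓ : Fin t → A) :
    ∃ n : ℕ, n ≤ 2 ^ (t - 1) - 1 ∧
      ∃ (sgn : Fin n → ℤ) (choice : Fin n → Fin t → Bool),
        (∀ m, sgn m = 1 ∨ sgn m = -1) ∧
        (∀ m, ∃ i, choice m i = true) ∧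
        p * (List.ofFn fun i => ℓ i * p).prod - p * (List.ofFn ℓ).prod * p =
          ∑ m : Fin n, sgn m •
            (p * (List.ofFn fun i =>
              if choice m i then p * ℓ i - ℓ i * p else ℓ i).prod * p) := by
  classical
  obtain ⟨s, rfl⟩ : ∃ s, t = s + 1 := ⟨t - 1, (Nat.succ_pred_eq_of_pos ht).symm⟩
  set F : (Fin (s + 1) → Bool) → A := fun ε =>
    p * (List.ofFn fun i => if ε i then p * ℓ i - ℓ i * p else ℓ i).prod * p with hF
  have hmain : p * (List.ofFn fun i => ℓ i * p).prod
      = ∑ ε : Fin s → Bool, F (Fin.cons false ε) := by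
    rw [List.ofFn_succ, List.prod_cons, ← mul_assoc, ← mul_assoc,
      idem_expand_aux p hp s (fun i => ℓ i.succ) (ℓ 0)]
    refine Finset.sum_congr rfl fun ε _ => ?_
    simp [hF, List.ofFn_succ, Fin.cons_zero, Fin.cons_succ, mul_assoc]
  have hzero : (Fin.cons false (fun _ : Fin s => false) : Fin (s+1) → Bool)
      = fun _ => false := by
    funext i
    refine Fin.cases ?_ ?_ i <;> simp
  have hF0 : F (Fin.cons false (fun _ : Fin s => false)) = p * (List.ofFn ℓ).prod * p := by
    rw [hzero]; simp [hF]
  have hcardS : Fintype.card {ε : Fin s → Bool // ε ≠ fun _ => false}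
      ≤ 2 ^ s - 1 := by
    have h1 : Fintype.card {ε : Fin s → Bool // ¬ (ε = fun _ => false)}
        = Fintype.card (Fin s → Bool) - Fintype.card {ε : Fin s → Bool // ε = fun _ => false} :=
      Fintype.card_subtype_compl _
    rw [Fintype.card_subtype_eq, Fintype.card_fun] at h1
    simpa using h1.le
  let e := Fintype.equivFin {ε : Fin s → Bool // ε ≠ fun _ => false}
  refine ⟨Fintype.card {ε : Fin s → Bool // ε ≠ fun _ => false}, by simpa using hcardS,
    fun _ => 1, fun m => Fin.cons false (e.symm m).val, fun m => Or.inl rfl, ?_, ?_⟩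
  · intro m
    obtain ⟨j, hj⟩ := Function.ne_iff.mp (e.symm m).prop
    exact ⟨j.succ, by simpa [Fin.cons_succ] using Bool.ne_false_iff.mp hj⟩
  · rw [hmain, ← hF0]
    have hsum : (∑ m, (1 : ℤ) • (p * (List.ofFn fun i =>
          if (Fin.cons (α := fun _ => Bool) false (e.symm m).val i) then p * ℓ i - ℓ i * p else ℓ i).prod * p))
        = ∑ x : {ε : Fin s → Bool // ε ≠ fun _ => false}, F (Fin.cons false x.val) := by
      rw [← Equiv.sum_comp e.symm
        (fun x : {ε : Fin s → Bool // ε ≠ fun _ => false} => F (Fin.cons false x.val))]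
      refine Finset.sum_congr rfl fun m _ => ?_
      simp [hF]
    rw [hsum, ← Finset.sum_subtype
      (Finset.univ.filter (fun ε : Fin s → Bool => ε ≠ fun _ => false))
      (by simp) (fun ε => F (Fin.cons false ε))]
    rw [Finset.filter_ne' Finset.univ, ← Finset.add_sum_erase Finset.univ
      (fun ε => F (Fin.cons false ε)) (Finset.mem_univ (fun _ : Fin s => false))]
    abel
end
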